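/- Let (Ω, F, μ) be a probability space and let U, W, ε_M, ε_T, ε_Y be square-integrable real random variables, each with mean 0 and variance 1, such that Cov(U, W) = ρ and all other pairs among {U, W, ε_M, ε_T, ε_Y} have covariance 0. Let a, c, d, ρ be real numbers with a² ≤ 1, d² ≤ 1, c² ≤ 1, ρ² ≤ 1, and 1 − (acρ)² > 0. Define M := c·W + √(1−c²)·ε_M, T := a·U + √(1−a²)·ε_T, and Y := d·W + √(1−d²)·ε_Y (the M-structure with b = 0). Then β_T / Cov(T,Y) · (adρ) = adρ·(1−c²)/(1−(acρ)²) and, whenever adρ ≠ 0, |β_T| / |Cov(T,Y)| = (1−c²)/(1−(acρ)²) ≤ 1, i.e., the adjusted estimator has absolute bias no larger than the unadjusted one. -/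

import Mathlib

open MeasureTheory ProbabilityTheory

/-- Covariance of two real random variables: `Cov(X,Y) = E[XY] - E[X] E[Y]`. -/
noncomputable def covar {Ω : Type*} [MeasurableSpace Ω] (μ : Measure Ω) (X Y : Ω → ℝ) : ℝ :=
  (∫ ω, X ω * Y ω ∂μ) - (∫ ω, X ω ∂μ) * (∫ ω, Y ω ∂μ)

/-- The population OLS coefficient on `T` when regressing `Y` on `(T, M)`. -/
noncomputable def betaT {Ω : Type*} [MeasurableSpace Ω] (μ : Measure Ω) (Y T M : Ω → ℝ) : ℝ :=
  (covar μ Y T * variance M μ - covar μ Y M * covar μ M T) /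
    (variance T μ * variance M μ - (covar μ M T) ^ 2)

/-!
With all primitive variables standardized, `T` and `M` have unit variance, so
`β_T = (Cov(Y,T) - Cov(Y,M) Cov(M,T)) / (1 - Cov(M,T)²)`. The noise terms are uncorrelated with
everything else, so `Cov(T,Y) = adρ`, `Cov(Y,M) = dc` and `Cov(M,T) = acρ`, whence
`β_T = adρ (1 - c²) / (1 - (acρ)²)`: adjusting rescales the bias by `(1 - c²) / (1 - (acρ)²)`,
which is at most `1` because `(acρ)² ≤ c²`.
-/

section Covar

variable {Ω : Type*} [MeasurableSpace Ω] {μ : Measure Ω}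

lemma covar_comm (X Y : Ω → ℝ) : covar μ X Y = covar μ Y X := by
  simp only [covar, mul_comm (X _), mul_comm (∫ ω, X ω ∂μ)]

variable [IsProbabilityMeasure μ] {X X' Y Y' : Ω → ℝ}

lemma covar_eq_covariance (hX : MemLp X 2 μ) (hY : MemLp Y 2 μ) :
    covar μ X Y = cov[X, Y; μ] :=
  (covariance_eq_sub hX hY).symm

lemma variance_eq_covar (hX : MemLp X 2 μ) : variance X μ = covar μ X X := by
  rw [covar_eq_covariance hX hX, covariance_self hX.aemeasurable]

lemma covar_linComb (hX : MemLp X 2 μ) (hX' : MemLp X' 2 μ) (hY : MemLp Y 2 μ)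
    (hY' : MemLp Y' 2 μ) (p q r s : ℝ) :
    covar μ (fun ω => p * X ω + q * X' ω) (fun ω => r * Y ω + s * Y' ω) =
      p * r * covar μ X Y + p * s * covar μ X Y' + q * r * covar μ X' Y
        + q * s * covar μ X' Y' := by
  have hpX := hX.const_mul p
  have hqX' := hX'.const_mul q
  have hrY := hY.const_mul r
  have hsY' := hY'.const_mul s
  rw [show (fun ω => p * X ω + q * X' ω) = (fun ω => p * X ω) + fun ω => q * X' ω from rfl,
    show (fun ω => r * Y ω + s * Y' ω) = (fun ω => r * Y ω) + fun ω => s * Y' ω from rfl,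
    covar_eq_covariance (hpX.add hqX') (hrY.add hsY'), covar_eq_covariance hX hY,
    covar_eq_covariance hX hY', covar_eq_covariance hX' hY, covar_eq_covariance hX' hY',
    covariance_add_left hpX hqX' (hrY.add hsY'), covariance_add_right hpX hrY hsY',
    covariance_add_right hqX' hrY hsY']
  simp only [covariance_const_mul_left, covariance_const_mul_right]
  ring

variable {ε η : Ω → ℝ}

lemma covar_linComb_of_uncorrelated (hX : MemLp X 2 μ) (hε : MemLp ε 2 μ) (hY : MemLp Y 2 μ)
    (hη : MemLp η 2 μ) (hXη : covar μ X η = 0) (hεY : covar μ ε Y = 0)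
    (hεη : covar μ ε η = 0) (p q r s : ℝ) :
    covar μ (fun ω => p * X ω + q * ε ω) (fun ω => r * Y ω + s * η ω) = p * r * covar μ X Y := by
  rw [covar_linComb hX hε hY hη, hXη, hεY, hεη]
  ring

lemma variance_mix_eq_one (hX : MemLp X 2 μ) (hε : MemLp ε 2 μ) (hXv : variance X μ = 1)
    (hεv : variance ε μ = 1) (hXε : covar μ X ε = 0) {c : ℝ} (hc : c ^ 2 ≤ 1) :
    variance (fun ω => c * X ω + Real.sqrt (1 - c ^ 2) * ε ω) μ = 1 := by
  have hmix : MemLp (fun ω => c * X ω + Real.sqrt (1 - c ^ 2) * ε ω) 2 μ :=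
    (hX.const_mul c).add (hε.const_mul _)
  rw [variance_eq_covar hmix, covar_linComb hX hε hX hε,
    ← variance_eq_covar hX, ← variance_eq_covar hε, hXv, hεv, covar_comm ε, hXε,
    Real.mul_self_sqrt (by linarith)]
  ring

end Covar

lemma one_sub_sq_div_le_one {a c ρ : ℝ} (ha : a ^ 2 ≤ 1) (hρ : ρ ^ 2 ≤ 1)
    (hpos : 0 < 1 - (a * c * ρ) ^ 2) :
    (1 - c ^ 2) / (1 - (a * c * ρ) ^ 2) ≤ 1 := by
  have : (a * c * ρ) ^ 2 ≤ c ^ 2 :=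
    calc (a * c * ρ) ^ 2 = c ^ 2 * (a ^ 2 * ρ ^ 2) := by ring
      _ ≤ c ^ 2 * 1 := by gcongr; exact mul_le_one₀ ha (sq_nonneg ρ) hρ
      _ = c ^ 2 := mul_one _
  rw [div_le_one hpos]
  linarith

theorem stmt5_general {Ω : Type*} [MeasurableSpace Ω] (μ : Measure Ω) [IsProbabilityMeasure μ]
    (U W εM εT εY : Ω → ℝ)
    (hU2 : MemLp U 2 μ) (hW2 : MemLp W 2 μ) (hεM2 : MemLp εM 2 μ)
    (hεT2 : MemLp εT 2 μ) (hεY2 : MemLp εY 2 μ)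
    (hUv : variance U μ = 1) (hWv : variance W μ = 1) (hεMv : variance εM μ = 1)
    (hεTv : variance εT μ = 1)
    (a c d ρ : ℝ)
    (hUW : covar μ U W = ρ)
    (hUεM : covar μ U εM = 0) (hUεT : covar μ U εT = 0) (hUεY : covar μ U εY = 0)
    (hWεM : covar μ W εM = 0) (hWεT : covar μ W εT = 0) (hWεY : covar μ W εY = 0)
    (hεMεT : covar μ εM εT = 0) (hεMεY : covar μ εM εY = 0) (hεTεY : covar μ εT εY = 0)
    (ha : a ^ 2 ≤ 1) (hc : c ^ 2 ≤ 1) (hρ : ρ ^ 2 ≤ 1)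
    (hpos : 0 < 1 - (a * c * ρ) ^ 2)
    (M T Y : Ω → ℝ)
    (hM : M = fun ω => c * W ω + Real.sqrt (1 - c ^ 2) * εM ω)
    (hT : T = fun ω => a * U ω + Real.sqrt (1 - a ^ 2) * εT ω)
    (hY : Y = fun ω => d * W ω + Real.sqrt (1 - d ^ 2) * εY ω) :
    betaT μ Y T M / covar μ T Y * (a * d * ρ) =
        a * d * ρ * (1 - c ^ 2) / (1 - (a * c * ρ) ^ 2) ∧
      (a * d * ρ ≠ 0 →
        |betaT μ Y T M| / |covar μ T Y| = (1 - c ^ 2) / (1 - (a * c * ρ) ^ 2) ∧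
          (1 - c ^ 2) / (1 - (a * c * ρ) ^ 2) ≤ 1) := by
  have hTY : covar μ T Y = a * d * ρ := by
    rw [hT, hY, covar_linComb_of_uncorrelated hU2 hεT2 hW2 hεY2 hUεY
      (by rw [covar_comm, hWεT]) hεTεY, hUW]
  have hYM : covar μ Y M = d * c := by
    rw [hY, hM, covar_linComb_of_uncorrelated hW2 hεY2 hW2 hεM2 hWεM
      (by rw [covar_comm, hWεY]) (by rw [covar_comm, hεMεY]), ← variance_eq_covar hW2, hWv,
      mul_one]
  have hMT : covar μ M T = a * c * ρ := by
    rw [hM, hT, covar_linComb_of_uncorrelated hW2 hεM2 hU2 hεT2 hWεT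
      (by rw [covar_comm, hUεM]) hεMεT, covar_comm, hUW]
    ring
  have hβ : betaT μ Y T M = a * d * ρ * ((1 - c ^ 2) / (1 - (a * c * ρ) ^ 2)) := by
    rw [betaT, covar_comm Y T, hTY, hYM, hMT, hM, hT,
      variance_mix_eq_one hW2 hεM2 hWv hεMv hWεM hc, variance_mix_eq_one hU2 hεT2 hUv hεTv hUεT ha]
    ring
  refine ⟨?_, fun had => ⟨?_, one_sub_sq_div_le_one ha hρ hpos⟩⟩
  · rw [hTY, div_mul_cancel_of_imp fun h => by rw [hβ, h, zero_mul], hβ, mul_div_assoc]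
  · rw [hβ, hTY, abs_mul, mul_div_cancel_left₀ _ (abs_ne_zero.mpr had), abs_of_nonneg]
    exact div_nonneg (by linarith [one_sub_sq_div_le_one ha hρ hpos, sq_nonneg c]) hpos.le

/-- M-structure with `b = 0` (U is not a cause of M): the adjusted estimator has
absolute bias no larger than the unadjusted one. -/
theorem stmt5 {Ω : Type*} [MeasurableSpace Ω] (μ : Measure Ω) [IsProbabilityMeasure μ]
    (U W εM εT εY : Ω → ℝ)
    (hU2 : MemLp U 2 μ) (hW2 : MemLp W 2 μ) (hεM2 : MemLp εM 2 μ)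
    (hεT2 : MemLp εT 2 μ) (hεY2 : MemLp εY 2 μ)
    (hUm : ∫ ω, U ω ∂μ = 0) (hWm : ∫ ω, W ω ∂μ = 0) (hεMm : ∫ ω, εM ω ∂μ = 0)
    (hεTm : ∫ ω, εT ω ∂μ = 0) (hεYm : ∫ ω, εY ω ∂μ = 0)
    (hUv : variance U μ = 1) (hWv : variance W μ = 1) (hεMv : variance εM μ = 1)
    (hεTv : variance εT μ = 1) (hεYv : variance εY μ = 1)
    (a c d ρ : ℝ)
    (hUW : covar μ U W = ρ)
    (hUεM : covar μ U εM = 0) (hUεT : covar μ U εT = 0) (hUεY : covar μ U εY = 0)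
    (hWεM : covar μ W εM = 0) (hWεT : covar μ W εT = 0) (hWεY : covar μ W εY = 0)
    (hεMεT : covar μ εM εT = 0) (hεMεY : covar μ εM εY = 0) (hεTεY : covar μ εT εY = 0)
    (ha : a ^ 2 ≤ 1) (hd : d ^ 2 ≤ 1) (hc : c ^ 2 ≤ 1) (hρ : ρ ^ 2 ≤ 1)
    (hpos : 0 < 1 - (a * c * ρ) ^ 2)
    (M T Y : Ω → ℝ)
    (hM : M = fun ω => c * W ω + Real.sqrt (1 - c ^ 2) * εM ω)
    (hT : T = fun ω => a * U ω + Real.sqrt (1 - a ^ 2) * εT ω)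
    (hY : Y = fun ω => d * W ω + Real.sqrt (1 - d ^ 2) * εY ω) :
    betaT μ Y T M / covar μ T Y * (a * d * ρ) =
        a * d * ρ * (1 - c ^ 2) / (1 - (a * c * ρ) ^ 2) ∧
      (a * d * ρ ≠ 0 →
        |betaT μ Y T M| / |covar μ T Y| = (1 - c ^ 2) / (1 - (a * c * ρ) ^ 2) ∧
          (1 - c ^ 2) / (1 - (a * c * ρ) ^ 2) ≤ 1) :=
  stmt5_general μ U W εM εT εY hU2 hW2 hεM2 hεT2 hεY2 hUv hWv hεMv hεTv a c d ρ hUW hUεM hUεT hUεY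
    hWεM hWεT hWεY hεMεT hεMεY hεTεY ha hc hρ hpos M T Y hM hT hY
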